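/- Let n ≥ 1 and let 0 < d < n. Every torus-invariant polynomial p ∈ MvPolynomial (Fin n × Fin n × Fin n) ℂ that is homogeneous of degree d is the zero polynomial; i.e., the natural action of ST_n(ℂ) × ST_n(ℂ) × ST_n(ℂ) on ℂ^n ⊗ ℂ^n ⊗ ℂ^n has no nonzero homogeneous invariants of degree strictly between 0 and n. -/

import Mathlib

open MvPolynomial

/-!
Scaling the first tensor factor by `a ∈ ST_n` multiplies the monomial `x^m` by `∏ aᵢ ^ eᵢ`, where
`eᵢ` is the degree of `m` in the slice `{i} × [n] × [n]`. If `x^m` occurs in an invariant, taking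
`a` equal to `2` at one index, `1/2` at another and `1` elsewhere forces all `eᵢ` to be equal,
so `n` divides `∑ eᵢ = d`, which is impossible for `0 < d < n`.
-/

/-- The scaling substitution `S_{a,b,c}`: the `ℂ`-algebra endomorphism of
`MvPolynomial (Fin n × Fin n × Fin n) ℂ` determined by
`X (i,j,k) ↦ (a i * b j * c k) • X (i,j,k)`. -/
noncomputable def scaleSub {n : ℕ} (a b c : Fin n → ℂˣ) :
    MvPolynomial (Fin n × Fin n × Fin n) ℂ →ₐ[ℂ] MvPolynomial (Fin n × Fin n × Fin n) ℂ :=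
  aeval fun v : Fin n × Fin n × Fin n =>
    (((a v.1 : ℂ) * (b v.2.1 : ℂ) * (c v.2.2 : ℂ))) • X v

/-- A polynomial is torus-invariant if it is fixed by all scaling substitutions `S_{a,b,c}`
with `∏ a = ∏ b = ∏ c = 1`; this encodes the natural action of
`ST_n(ℂ) × ST_n(ℂ) × ST_n(ℂ)` on `ℂ^n ⊗ ℂ^n ⊗ ℂ^n`. -/
def TorusInvariant {n : ℕ} (p : MvPolynomial (Fin n × Fin n × Fin n) ℂ) : Prop :=
  ∀ a b c : Fin n → ℂˣ,
    (∏ i, a i) = 1 → (∏ j, b j) = 1 → (∏ k, c k) = 1 → scaleSub a b c p = p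

section DiagonalScaling

variable {R σ : Type*} [CommSemiring R]

lemma aeval_smul_X_monomial (s : σ → R) (m : σ →₀ ℕ) (r : R) :
    aeval (fun v => s v • X v) (monomial m r) =
      monomial m (m.prod (fun v k => s v ^ k) * r) := by
  rw [aeval_monomial, monomial_eq, C_mul]
  simp only [smul_eq_C_mul, mul_pow, Finsupp.prod_mul, ← map_pow, ← map_finsuppProd, algebraMap_eq]
  ring

lemma coeff_aeval_smul_X (s : σ → R) (p : MvPolynomial σ R) (m : σ →₀ ℕ) :
    coeff m (aeval (fun v => s v • X v) p) = m.prod (fun v k => s v ^ k) * coeff m p := by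
  classical
  induction p using MvPolynomial.induction_on' with
  | monomial m' r =>
    rw [aeval_smul_X_monomial, coeff_monomial, coeff_monomial]
    split_ifs with h <;> simp [h]
  | add p q hp hq => rw [map_add, coeff_add, coeff_add, hp, hq, mul_add]

lemma prod_pow_eq_one_of_aeval_smul_X_eq_self {R : Type*} [CommRing R] [IsDomain R]
    {s : σ → R} {p : MvPolynomial σ R} (hp : aeval (fun v => s v • X v) p = p)
    {m : σ →₀ ℕ} (hm : coeff m p ≠ 0) : m.prod (fun v k => s v ^ k) = 1 :=
  mul_right_cancel₀ hm (by rw [← coeff_aeval_smul_X, hp, one_mul])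

end DiagonalScaling

lemma eq_of_forall_prod_pow_eq_one {K ι : Type*} [Field K] [CharZero K] [Fintype ι]
    {e : ι → ℕ} (h : ∀ a : ι → Kˣ, ∏ i, a i = 1 → ∏ i, (a i : K) ^ e i = 1) (i j : ι) :
    e i = e j := by
  classical
  rcases eq_or_ne i j with rfl | hij
  · rfl
  set u : Kˣ := Units.mk0 2 two_ne_zero
  let a : ι → Kˣ := fun x => if x = i then u else if x = j then u⁻¹ else 1
  have ha : ∏ x, a x = 1 := by
    rw [Fintype.prod_eq_mul i j hij (fun x hx => by simp [a, hx.1, hx.2])]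
    simp [a, hij.symm]
  have hpow := h a ha
  rw [Fintype.prod_eq_mul i j hij (fun x hx => by simp [a, hx.1, hx.2])] at hpow
  simp only [a, if_pos, if_neg hij.symm, u] at hpow
  have h2 : (2 : K) ^ e i = 2 ^ e j := by
    simpa [mul_inv_eq_one₀ (pow_ne_zero _ (two_ne_zero' K))] using hpow
  exact Nat.pow_right_injective le_rfl (by exact_mod_cast h2)

lemma card_dvd_sum_of_forall_eq {ι : Type*} [Fintype ι] {e : ι → ℕ} (h : ∀ i j, e i = e j) :
    Fintype.card ι ∣ ∑ i, e i := by
  cases isEmpty_or_nonempty ι with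
  | inl _ => simp
  | inr hne =>
    obtain ⟨i₀⟩ := hne
    exact ⟨e i₀, Finset.sum_const_nat fun i _ => h i i₀⟩

lemma scaleSub_one_one {n : ℕ} (a : Fin n → ℂˣ) :
    scaleSub a 1 1 = aeval fun v => (a v.1 : ℂ) • X v := by
  simp [scaleSub]

lemma TorusInvariant.prod_pow_mapDomain_fst_eq_one {n : ℕ}
    {p : MvPolynomial (Fin n × Fin n × Fin n) ℂ} (hinv : TorusInvariant p)
    {m : Fin n × Fin n × Fin n →₀ ℕ} (hm : coeff m p ≠ 0) (a : Fin n → ℂˣ) (ha : ∏ i, a i = 1) :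
    ∏ i, (a i : ℂ) ^ m.mapDomain Prod.fst i = 1 := by
  have hfix : aeval (fun v => (a v.1 : ℂ) • X v) p = p := by
    rw [← scaleSub_one_one]
    exact hinv a 1 1 ha Finset.prod_const_one Finset.prod_const_one
  rw [← Finsupp.prod_fintype _ _ fun _ => pow_zero _,
    Finsupp.prod_mapDomain_index (fun _ => pow_zero _) fun _ _ _ => pow_add _ _ _]
  exact prod_pow_eq_one_of_aeval_smul_X_eq_self hfix hm

theorem no_invariants_of_low_degree_general (n : ℕ) (d : ℕ) (hd0 : 0 < d) (hdn : d < n)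
    (p : MvPolynomial (Fin n × Fin n × Fin n) ℂ)
    (hinv : TorusInvariant p) (hhom : p.IsHomogeneous d) :
    p = 0 := by
  ext m
  rw [coeff_zero]
  by_contra hm
  set e := m.mapDomain Prod.fst
  have hsum : ∑ i, e i = d := by
    rw [← Finsupp.degree_eq_sum, Finsupp.degree_mapDomain, Finsupp.degree_eq_weight_one]
    exact hhom hm
  have hconst : ∀ i j, e i = e j :=
    eq_of_forall_prod_pow_eq_one (hinv.prod_pow_mapDomain_fst_eq_one hm)
  have hdvd : n ∣ d := by simpa [hsum] using card_dvd_sum_of_forall_eq hconst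
  exact hd0.ne' (Nat.eq_zero_of_dvd_of_lt hdvd hdn)

/-- There are no nonzero torus-invariant homogeneous polynomials of degree strictly
between `0` and `n`. -/
theorem no_invariants_of_low_degree (n : ℕ) (hn : 1 ≤ n) (d : ℕ) (hd0 : 0 < d) (hdn : d < n)
    (p : MvPolynomial (Fin n × Fin n × Fin n) ℂ)
    (hinv : TorusInvariant p) (hhom : p.IsHomogeneous d) :
    p = 0 :=
  no_invariants_of_low_degree_general n d hd0 hdn p hinv hhom
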